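/- The inverse reduction red_{t_0}^{-1} applied to a symplectic column (a_1,...,a_{t_0}) with target length l (where l - t_0 - Σ l_i =: l_{t_0+1} ≥ 0 is even) produces a strictly increasing sequence of length l with entries in [1, max(a_{t_0}+1+l_{t_0+1}, l_1)]: the concatenation T_0 T_1 ... T_{t_0} with T_0 = (1,...,l_1), T_i = (a_i, a_i+1, ..., a_i+l_{i+1}) if a_i even and T_i = (a_i, a_i+2, a_i+3, ..., a_i+1+l_{i+1}) if a_i odd, is strictly increasing. -/

import Mathlib

/-!
The block `T_i` (`i ≥ 1`) starts at `a_i`, and `l_{i+1}` is chosen, according to the parities of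
`a_i` and `a_{i+1}`, so that it ends below `a_{i+1}`; likewise `T_0 = (1, …, l_1)` ends below `a_1`.
Hence the blocks lie in the consecutive intervals `[1, a_1), [a_1, a_2), …,
[a_{t_0}, a_{t_0} + 2 + l_{t_0+1})`, so their concatenation is strictly increasing, and its length
`l_1 + Σ_{i=1}^{t_0} (l_{i+1} + 1)` is `l` by the definition of `l_{t_0+1}`.
-/

namespace InverseReduction

section Concatenation

variable {α : Type*}

theorem length_flatten_map_range (T : ℕ → List α) (n : ℕ) :
    ((List.range n).map T).flatten.length = ∑ i ∈ Finset.range n, (T i).length := by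
  induction n with
  | zero => rfl
  | succ n ih => simp [List.range_succ, Finset.sum_range_succ, ih]

theorem length_flatten_map_range_succ {T : ℕ → List α} {g : ℕ → ℤ} {n : ℕ}
    (h0 : ((T 0).length : ℤ) = g 1) (hsucc : ∀ i < n, ((T (i + 1)).length : ℤ) = g (i + 2) + 1) :
    (((List.range (n + 1)).map T).flatten.length : ℤ) =
      n + ∑ i ∈ Finset.Icc 1 n, g i + g (n + 1) := by
  have hsum : ∑ i ∈ Finset.Icc 1 n, g i + g (n + 1) = g 1 + ∑ i ∈ Finset.range n, g (i + 2) := by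
    rw [← Finset.sum_Icc_succ_top (by omega), ← Finset.Ico_add_one_right_eq_Icc,
      Finset.sum_Ico_eq_sum_range, Nat.add_sub_cancel, Finset.sum_range_succ']
    ring_nf
  rw [add_assoc, hsum, length_flatten_map_range, Finset.sum_range_succ']
  push_cast
  rw [Finset.sum_congr rfl fun i hi => hsucc i (Finset.mem_range.1 hi), Finset.sum_add_distrib, h0]
  simp only [Finset.sum_const, Finset.card_range, nsmul_eq_mul, mul_one]
  ring

variable [Preorder α] {T : ℕ → List α} {b : ℕ → α} {n : ℕ}

theorem mem_Ico_of_mem_flatten_map_range (hb : Monotone b)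
    (hT : ∀ i < n, ∀ x ∈ T i, x ∈ Set.Ico (b i) (b (i + 1))) :
    ∀ x ∈ ((List.range n).map T).flatten, x ∈ Set.Ico (b 0) (b n) := by
  simp only [List.mem_flatten, List.mem_map, List.mem_range]
  rintro x ⟨_, ⟨i, hi, rfl⟩, hx⟩
  obtain ⟨hlo, hhi⟩ := hT i hi x hx
  exact ⟨(hb (Nat.zero_le i)).trans hlo, hhi.trans_le (hb hi)⟩

theorem pairwise_lt_flatten_map_range (hb : Monotone b)
    (hsorted : ∀ i < n, (T i).Pairwise (· < ·))
    (hT : ∀ i < n, ∀ x ∈ T i, x ∈ Set.Ico (b i) (b (i + 1))) :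
    ((List.range n).map T).flatten.Pairwise (· < ·) := by
  rw [List.pairwise_flatten, List.pairwise_map]
  refine ⟨?_, List.pairwise_lt_range.imp_of_mem fun hi hj hij x hx y hy => ?_⟩
  · simp only [List.mem_map, List.mem_range]
    rintro _ ⟨i, hi, rfl⟩
    exact hsorted i hi
  · rw [List.mem_range] at hi hj
    exact (hT _ hi x hx).2.trans_le ((hb hij).trans (hT _ hj y hy).1)

end Concatenation

/- In `(List.range n).map (fun j => (j : ℤ) + 1)` the list `List.range n` is coerced to `List ℤ`
through the monad instance (`List.range n >>= pure ∘ Nat.cast`); the blocks below are written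
the same way, so that they match the statement by `rfl`. -/
theorem range_cast_eq_map (n : ℕ) :
    ((List.range n : List ℕ) : List ℤ) = (List.range n).map (↑) := by
  simp only [List.pure_def, List.bind_eq_flatMap, List.map_eq_flatMap]

theorem mem_range_cast {n : ℕ} {x : ℤ} :
    x ∈ ((List.range n : List ℕ) : List ℤ) ↔ 0 ≤ x ∧ x < n := by
  simp only [range_cast_eq_map, List.mem_map, List.mem_range]
  constructor
  · rintro ⟨j, hj, rfl⟩
    omega
  · rintro ⟨h0, hn⟩
    exact ⟨x.toNat, by omega, by omega⟩

theorem pairwise_lt_range_cast (n : ℕ) : ((List.range n : List ℕ) : List ℤ).Pairwise (· < ·) := by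
  rw [range_cast_eq_map]
  exact List.pairwise_lt_range.map _ fun _ _ => Int.ofNat_lt.2

def initialBlock (m : ℕ) : List ℤ :=
  (List.range m).map (fun j => (j : ℤ) + 1)

theorem pairwise_lt_initialBlock (m : ℕ) : (initialBlock m).Pairwise (· < ·) :=
  (pairwise_lt_range_cast m).map _ fun _ _ h => by omega

theorem length_initialBlock (m : ℕ) : (initialBlock m).length = m := by
  simp [initialBlock]

theorem mem_initialBlock {m : ℕ} {x : ℤ} (hx : x ∈ initialBlock m) : 1 ≤ x ∧ x ≤ m := by
  obtain ⟨j, hj, rfl⟩ := List.mem_map.1 hx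
  have := mem_range_cast.1 hj
  omega

/-- The block `T_i` of the paper, with `c = a_i` and `m = l_{i+1}`. -/
def block (c : ℤ) (m : ℕ) : List ℤ :=
  if Even c then (List.range (m + 1)).map (fun j => c + j)
  else c :: (List.range m).map (fun j => c + 2 + j)

def blockLast (c : ℤ) (m : ℕ) : ℤ :=
  if Even c then c + m else if m = 0 then c else c + 1 + m

theorem pairwise_lt_block (c : ℤ) (m : ℕ) : (block c m).Pairwise (· < ·) := by
  unfold block
  split_ifs
  · exact (pairwise_lt_range_cast _).map _ fun _ _ h => by omega
  · refine List.pairwise_cons.2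
      ⟨fun x hx => ?_, (pairwise_lt_range_cast _).map _ fun _ _ h => by omega⟩
    obtain ⟨j, hj, rfl⟩ := List.mem_map.1 hx
    have := (mem_range_cast.1 hj).1
    omega

theorem length_block (c : ℤ) (m : ℕ) : (block c m).length = m + 1 := by
  unfold block
  split_ifs <;> simp

theorem mem_block {c x : ℤ} {m : ℕ} (hx : x ∈ block c m) : c ≤ x ∧ x ≤ blockLast c m := by
  unfold block at hx
  unfold blockLast
  split_ifs at hx ⊢ with hc hm
  · obtain ⟨j, hj, rfl⟩ := List.mem_map.1 hx
    have := mem_range_cast.1 hj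
    omega
  · obtain rfl : x = c := by simpa [hm] using hx
    omega
  · rcases List.mem_cons.1 hx with rfl | hx
    · omega
    obtain ⟨j, hj, rfl⟩ := List.mem_map.1 hx
    have := mem_range_cast.1 hj
    omega

theorem blockLast_le (c : ℤ) (m : ℕ) : blockLast c m ≤ c + 1 + m := by
  unfold blockLast
  split_ifs <;> omega

/-- The length `l_{i+1}` of the paper, for `p = a_i` and `q = a_{i+1}`;
`l_1` is `gapLength 0 a_1`. -/
def gapLength (p q : ℤ) : ℤ :=
  if Even p ↔ Even q then q - p - 2
  else if Even p ∧ ¬Even q then q - p - 1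
  else if 3 ≤ q - p then q - p - 3
  else 0

theorem gapLength_nonneg {p q : ℤ} (hpq : p < q) : 0 ≤ gapLength p q := by
  unfold gapLength
  simp only [Int.even_iff] at *
  split_ifs <;> omega

theorem gapLength_lt_sub {p q : ℤ} (hpq : p < q) : gapLength p q < q - p := by
  unfold gapLength
  simp only [Int.even_iff] at *
  split_ifs <;> omega

theorem gapLength_zero_left (q : ℤ) : gapLength 0 q = if Even q then q - 2 else q - 1 := by
  by_cases hq : Even q <;> simp [gapLength, hq]

theorem blockLast_gapLength_lt {p q : ℤ} (hpq : p < q) :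
    blockLast p (gapLength p q).toNat < q := by
  unfold blockLast gapLength
  simp only [Int.even_iff] at *
  split_ifs <;> omega

theorem mem_Ico_of_mem_block {c x : ℤ} {m : ℕ} (hx : x ∈ block c m) :
    x ∈ Set.Ico c (c + 2 + m) := by
  have := mem_block hx
  have := blockLast_le c m
  exact ⟨by omega, by omega⟩

theorem mem_Ico_of_mem_block_gapLength {p q x : ℤ} (hpq : p < q)
    (hx : x ∈ block p (gapLength p q).toNat) : x ∈ Set.Ico p q :=
  ⟨(mem_block hx).1, (mem_block hx).2.trans_lt (blockLast_gapLength_lt hpq)⟩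

/-- The data of `red_{t_0}^{-1}`: the column `a`, the lengths `g i = l_i` and the blocks
`T i = T_i`. -/
structure IsInverseReduction (t0 : ℕ) (a g : ℕ → ℤ) (T : ℕ → List ℤ) : Prop where
  one_le : 1 ≤ t0
  one_le_a_one : 1 ≤ a 1
  lt_succ : ∀ i, 1 ≤ i → i < t0 → a i < a (i + 1)
  g_one : g 1 = gapLength 0 (a 1)
  g_succ : ∀ i, 1 ≤ i → i < t0 → g (i + 1) = gapLength (a i) (a (i + 1))
  g_last_nonneg : 0 ≤ g (t0 + 1)
  T_zero : T 0 = initialBlock (g 1).toNat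
  T_eq_block : ∀ i, 1 ≤ i → i ≤ t0 → T i = block (a i) (g (i + 1)).toNat

/-- `1, a_1, …, a_{t_0}` followed by a strict upper bound for `T_{t_0}`: the block `T_i` lies in
`[blockStart i, blockStart (i + 1))`. -/
def blockStart (t0 : ℕ) (a g : ℕ → ℤ) (i : ℕ) : ℤ :=
  if i = 0 then 1 else if i ≤ t0 then a i else a t0 + 2 + g (t0 + 1)

section BlockStart

variable {t0 : ℕ} {a g : ℕ → ℤ} {i : ℕ}

theorem blockStart_zero : blockStart t0 a g 0 = 1 := rfl

theorem blockStart_of_le (h1 : 1 ≤ i) (h : i ≤ t0) : blockStart t0 a g i = a i := by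
  simp [blockStart, Nat.one_le_iff_ne_zero.1 h1, h]

theorem blockStart_of_lt (h : t0 < i) : blockStart t0 a g i = a t0 + 2 + g (t0 + 1) := by
  simp [blockStart, Nat.ne_zero_of_lt h, Nat.not_le_of_lt h]

end BlockStart

namespace IsInverseReduction

variable {t0 : ℕ} {a g : ℕ → ℤ} {T : ℕ → List ℤ}

theorem g_one_nonneg (h : IsInverseReduction t0 a g T) : 0 ≤ g 1 :=
  h.g_one ▸ gapLength_nonneg h.one_le_a_one

theorem g_nonneg (h : IsInverseReduction t0 a g T) {i : ℕ} (hi : i ≤ t0) : 0 ≤ g (i + 1) := by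
  rcases i.eq_zero_or_pos with rfl | hi0
  · exact h.g_one_nonneg
  rcases hi.lt_or_eq with hlt | rfl
  · exact h.g_succ i hi0 hlt ▸ gapLength_nonneg (h.lt_succ i hi0 hlt)
  · exact h.g_last_nonneg

theorem monotone_blockStart (h : IsInverseReduction t0 a g T) : Monotone (blockStart t0 a g) := by
  refine monotone_nat_of_le_succ fun i => ?_
  rcases Nat.lt_trichotomy i t0 with hi | rfl | hi
  · rcases i.eq_zero_or_pos with rfl | hi0
    · rw [blockStart_zero, blockStart_of_le le_rfl h.one_le]
      exact h.one_le_a_one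
    · rw [blockStart_of_le hi0 hi.le, blockStart_of_le (by omega) hi]
      exact (h.lt_succ i hi0 hi).le
  · rw [blockStart_of_le h.one_le le_rfl, blockStart_of_lt (Nat.lt_succ_self _)]
    linarith [h.g_last_nonneg]
  · rw [blockStart_of_lt hi, blockStart_of_lt (by omega)]

theorem pairwise_lt (h : IsInverseReduction t0 a g T) : ∀ i < t0 + 1, (T i).Pairwise (· < ·) := by
  rintro (_ | i) hi
  · exact h.T_zero ▸ pairwise_lt_initialBlock _
  · exact h.T_eq_block (i + 1) (by omega) (by omega) ▸ pairwise_lt_block _ _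

theorem mem_Ico (h : IsInverseReduction t0 a g T) :
    ∀ i < t0 + 1, ∀ x ∈ T i, x ∈ Set.Ico (blockStart t0 a g i) (blockStart t0 a g (i + 1)) := by
  rintro (_ | i) hi x hx
  · have hx := mem_initialBlock (h.T_zero ▸ hx)
    have hg1 := h.g_one ▸ gapLength_lt_sub h.one_le_a_one
    rw [Int.toNat_of_nonneg h.g_one_nonneg] at hx
    rw [blockStart_zero, blockStart_of_le le_rfl h.one_le]
    exact ⟨hx.1, by omega⟩
  have hit : i + 1 ≤ t0 := by omega
  rw [h.T_eq_block (i + 1) (by omega) hit] at hx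
  rw [blockStart_of_le (by omega) hit]
  rcases hit.lt_or_eq with hlt | rfl
  · rw [h.g_succ (i + 1) (by omega) hlt] at hx
    rw [blockStart_of_le (by omega) hlt]
    exact mem_Ico_of_mem_block_gapLength (h.lt_succ (i + 1) (by omega) hlt) hx
  · rw [blockStart_of_lt (Nat.lt_succ_self _), ← Int.toNat_of_nonneg h.g_last_nonneg]
    exact mem_Ico_of_mem_block hx

theorem pairwise_lt_flatten (h : IsInverseReduction t0 a g T) :
    ((List.range (t0 + 1)).map T).flatten.Pairwise (· < ·) :=
  pairwise_lt_flatten_map_range h.monotone_blockStart h.pairwise_lt h.mem_Ico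

theorem mem_flatten (h : IsInverseReduction t0 a g T) :
    ∀ x ∈ ((List.range (t0 + 1)).map T).flatten, 1 ≤ x ∧ x ≤ a t0 + 1 + g (t0 + 1) := by
  intro x hx
  have hx' := mem_Ico_of_mem_flatten_map_range h.monotone_blockStart h.mem_Ico x hx
  rw [blockStart_zero, blockStart_of_lt (Nat.lt_succ_self t0)] at hx'
  exact ⟨hx'.1, by linarith [hx'.2]⟩

theorem length_flatten (h : IsInverseReduction t0 a g T) :
    (((List.range (t0 + 1)).map T).flatten.length : ℤ) =
      t0 + ∑ i ∈ Finset.Icc 1 t0, g i + g (t0 + 1) := by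
  refine length_flatten_map_range_succ ?_ fun i hi => ?_
  · rw [h.T_zero, length_initialBlock, Int.toNat_of_nonneg h.g_one_nonneg]
  · rw [h.T_eq_block (i + 1) (by omega) (by omega), length_block, Nat.cast_add,
      Int.toNat_of_nonneg (h.g_nonneg (by omega)), Nat.cast_one]

end IsInverseReduction

end InverseReduction

open InverseReduction

open Classical in
theorem stmt14_general (t0 l : ℕ) (ht0 : 1 ≤ t0) (a g : ℕ → ℤ)
    (hsymp : ∀ i : ℕ, 1 ≤ i → i ≤ t0 → 2 * (i : ℤ) - 1 ≤ a i)
    (hinc : ∀ i : ℕ, 1 ≤ i → i < t0 → a i < a (i + 1))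
    (hg1 : g 1 = if Even (a 1) then a 1 - 2 else a 1 - 1)
    (hgi : ∀ i : ℕ, 1 ≤ i → i < t0 →
      g (i + 1) =
        if Even (a i) ↔ Even (a (i + 1)) then a (i + 1) - a i - 2
        else if Even (a i) ∧ ¬Even (a (i + 1)) then a (i + 1) - a i - 1
        else if 3 ≤ a (i + 1) - a i then a (i + 1) - a i - 3
        else 0)
    (hglast : g (t0 + 1) = (l : ℤ) - t0 - ∑ i ∈ Finset.Icc 1 t0, g i)
    (hlastnn : 0 ≤ g (t0 + 1))
    (T : ℕ → List ℤ)
    (hT0 : T 0 = (List.range (g 1).toNat).map (fun j => (j : ℤ) + 1))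
    (hTi : ∀ i : ℕ, 1 ≤ i → i ≤ t0 →
      T i =
        if Even (a i) then (List.range ((g (i + 1)).toNat + 1)).map (fun j => a i + j)
        else a i :: (List.range (g (i + 1)).toNat).map (fun j => a i + 2 + j))
    (L : List ℤ) (hL : L = ((List.range (t0 + 1)).map T).flatten) :
    List.Chain' (· < ·) L ∧ L.length = l ∧
      ∀ x ∈ L, 1 ≤ x ∧ x ≤ max (a t0 + 1 + g (t0 + 1)) (g 1) := by
  have h : IsInverseReduction t0 a g T :=
    { one_le := ht0
      one_le_a_one := by simpa using hsymp 1 le_rfl ht0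
      lt_succ := hinc
      g_one := hg1.trans (gapLength_zero_left _).symm
      g_succ := hgi
      g_last_nonneg := hlastnn
      T_zero := hT0
      T_eq_block := hTi }
  subst hL
  refine ⟨h.pairwise_lt_flatten.isChain, ?_, fun x hx => ?_⟩
  · have := h.length_flatten
    omega
  · exact (h.mem_flatten x hx).imp_right (le_max_of_le_left ·)

open Classical in
/-- The inverse reduction `red_{t_0}^{-1}` applied to a symplectic column
`(a_1, …, a_{t_0})` with target length `l` produces a strictly increasing
sequence of length `l` with entries in `[1, max (a_{t_0} + 1 + l_{t_0+1}) l_1]`: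
the concatenation `T_0 T_1 ⋯ T_{t_0}` is strictly increasing. -/
theorem stmt14 (t0 l : ℕ) (ht0 : 1 ≤ t0) (a g : ℕ → ℤ)
    (hsymp : ∀ i : ℕ, 1 ≤ i → i ≤ t0 → 2 * (i : ℤ) - 1 ≤ a i)
    (hinc : ∀ i : ℕ, 1 ≤ i → i < t0 → a i < a (i + 1))
    (hg1 : g 1 = if Even (a 1) then a 1 - 2 else a 1 - 1)
    (hgi : ∀ i : ℕ, 1 ≤ i → i < t0 →
      g (i + 1) =
        if Even (a i) ↔ Even (a (i + 1)) then a (i + 1) - a i - 2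
        else if Even (a i) ∧ ¬Even (a (i + 1)) then a (i + 1) - a i - 1
        else if 3 ≤ a (i + 1) - a i then a (i + 1) - a i - 3
        else 0)
    (hglast : g (t0 + 1) = (l : ℤ) - t0 - ∑ i ∈ Finset.Icc 1 t0, g i)
    (hlastnn : 0 ≤ g (t0 + 1)) (hlasteven : Even (g (t0 + 1)))
    (T : ℕ → List ℤ)
    (hT0 : T 0 = (List.range (g 1).toNat).map (fun j => (j : ℤ) + 1))
    (hTi : ∀ i : ℕ, 1 ≤ i → i ≤ t0 →
      T i =
        if Even (a i) then (List.range ((g (i + 1)).toNat + 1)).map (fun j => a i + j)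
        else a i :: (List.range (g (i + 1)).toNat).map (fun j => a i + 2 + j))
    (L : List ℤ) (hL : L = ((List.range (t0 + 1)).map T).flatten) :
    List.Chain' (· < ·) L ∧ L.length = l ∧
      ∀ x ∈ L, 1 ≤ x ∧ x ≤ max (a t0 + 1 + g (t0 + 1)) (g 1) :=
  stmt14_general t0 l ht0 a g hsymp hinc hg1 hgi hglast hlastnn T hT0 hTi L hL
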